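/- Let E be a symmetric cosimplicial monoid in vector spaces over a field of characteristic zero, with Pⁿ(E) ⊆ E(n) the subspace of anti-symmetric poly-primitive elements (σ(a)=sgn(σ)a for all σ∈Sₙ, and ∂ᵢ(a)=â_{i−1}+âᵢ for i=1,...,n). Then Pⁿ(E) ∩ Bⁿ(E) = 0, where Bⁿ(E) is the space of coboundaries of the total cosimplicial differential. -/

import Mathlib

/-!
Anti-symmetrization `alt = ∑ σ, sgn σ • σ` kills every coboundary: the faces `∂ᵢ` with
`0 < i < n` are fixed by the transposition `tᵢ`, which `alt` turns into `-1`, and the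
outer faces `∂₀` and `∂ₙ = tₙ₋₁ ⋯ t₁ ∂₀` cancel in the alternating sum since the cycle
`tₙ₋₁ ⋯ t₁` has sign `(-1)ⁿ⁻¹`. On an anti-symmetric element `alt` is multiplication by
`n!`, which is invertible in characteristic zero.
-/

/-- `âⱼ = tⱼ ⋯ t₁ ∂₀(a)`, where `tᵢ` is the transposition `(i, i+1)` (`â₀ = ∂₀(a)`). -/
noncomputable def ahat (k : Type*) [Field k] (n : ℕ) (V W : Type*)
    [AddCommGroup V] [Module k V] [AddCommGroup W] [Module k W]
    (d : Fin (n + 2) → V →ₗ[k] W)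
    (ρ : Equiv.Perm (Fin (n + 1)) →* Module.End k W) (a : V) (j : ℕ) : W :=
  ρ (((List.ofFn (fun s : Fin n => Equiv.swap s.castSucc s.succ)).take j).reverse.prod)
    (d 0 a)

open Equiv

section Alternatization

variable {k α M : Type*} [Semiring k] [AddCommGroup M] [Module k M]
  [Fintype α] [DecidableEq α] (ρ : Perm α →* Module.End k M)

def alternatization : Module.End k M :=
  ∑ σ : Perm α, (Perm.sign σ : ℤ) • ρ σ

lemma alternatization_apply (x : M) :
    alternatization ρ x = ∑ σ : Perm α, (Perm.sign σ : ℤ) • ρ σ x := by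
  simp [alternatization]

lemma alternatization_apply_perm (w : Perm α) (x : M) :
    alternatization ρ (ρ w x) = (Perm.sign w : ℤ) • alternatization ρ x := by
  simp only [alternatization_apply, Finset.smul_sum, smul_smul]
  refine Fintype.sum_equiv (Equiv.mulRight w) _ _ fun σ => ?_
  have hsign : Perm.sign σ = Perm.sign w * Perm.sign (σ * w) := by
    rw [Perm.sign_mul, mul_comm, mul_assoc, Int.units_mul_self, mul_one]
  simp only [Equiv.coe_mulRight]
  rw [ρ.map_mul, Module.End.mul_apply, hsign, Units.val_mul]

lemma alternatization_eq_zero_of_apply_eq_self [IsAddTorsionFree M] {t : Perm α}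
    (ht : Perm.sign t = -1) {x : M} (hx : ρ t x = x) : alternatization ρ x = 0 := by
  have h := alternatization_apply_perm ρ t x
  rw [hx, ht, Units.val_neg, Units.val_one, neg_one_zsmul] at h
  exact self_eq_neg.mp h

lemma alternatization_eq_card_smul {a : M} (ha : ∀ σ, ρ σ a = (Perm.sign σ : ℤ) • a) :
    alternatization ρ a = Fintype.card (Perm α) • a := by
  simp [alternatization_apply, ha, smul_smul, ← Units.val_mul, Int.units_mul_self]

end Alternatization

lemma sign_prod_swap_succ (m : ℕ) :
    Perm.sign ((List.ofFn fun i : Fin m => swap i.castSucc i.succ).reverse.prod) =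
      (-1) ^ m := by
  have h_swap (i : Fin m) : Perm.sign (swap i.castSucc i.succ) = -1 :=
    Perm.sign_swap Fin.castSucc_lt_succ.ne
  simp [MonoidHom.map_list_prod, List.map_ofFn, Function.comp_def, h_swap]

lemma alternatization_coboundary_eq_zero {k U V : Type*} [Ring k] [AddCommGroup U]
    [Module k U] [AddCommGroup V] [Module k V] [IsAddTorsionFree V] {m : ℕ}
    (d : Fin (m + 2) → U →ₗ[k] V) (ρ : Perm (Fin (m + 1)) →* Module.End k V)
    (h_inner : ∀ i : Fin m,
      ρ (swap i.castSucc i.succ) ∘ₗ d ⟨(i : ℕ) + 1, by omega⟩ = d ⟨(i : ℕ) + 1, by omega⟩)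
    (h_last : ρ ((List.ofFn fun i : Fin m => swap i.castSucc i.succ).reverse.prod) ∘ₗ d 0 =
      d (Fin.last (m + 1)))
    (b : U) :
    alternatization ρ (∑ i : Fin (m + 2), ((-1 : k) ^ (i : ℕ)) • d i b) = 0 := by
  have h_mid (j : Fin m) : alternatization ρ (d j.succ.castSucc b) = 0 :=
    alternatization_eq_zero_of_apply_eq_self ρ (Perm.sign_swap (Fin.castSucc_lt_succ (i := j)).ne)
      (LinearMap.congr_fun (h_inner j) b)
  have h_end : alternatization ρ (d (Fin.last (m + 1)) b) =
      ((-1 : ℤ) ^ m) • alternatization ρ (d 0 b) := by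
    rw [← h_last, LinearMap.comp_apply, alternatization_apply_perm, sign_prod_swap_succ]
    simp
  rw [Fin.sum_univ_castSucc, Fin.sum_univ_succ]
  simp only [map_add, map_sum, map_smul, h_mid, h_end,
    smul_zero, Finset.sum_const_zero, add_zero, Fin.val_castSucc, Fin.val_zero,
    Fin.val_last, pow_zero, one_smul, ← Int.cast_smul_eq_zsmul k, smul_smul]
  have h_odd : Odd (m + 1 + m) := ⟨m, by ring⟩
  push_cast
  rw [← pow_add, h_odd.neg_one_pow, neg_one_smul, Fin.castSucc_zero, add_neg_cancel]

theorem stmt13 (k : Type*) [Field k] [CharZero k] (m : ℕ)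
    (U V : Type*) [AddCommGroup U] [Module k U] [AddCommGroup V] [Module k V]
    (dV : Fin (m + 2) → U →ₗ[k] V)
    (ρV : Equiv.Perm (Fin (m + 1)) →* Module.End k V)
    (h1V : ∀ i : Fin m,
      (ρV (Equiv.swap i.castSucc i.succ)) ∘ₗ dV ⟨(i : ℕ) + 1, by have := i.isLt; omega⟩ =
        dV ⟨(i : ℕ) + 1, by have := i.isLt; omega⟩)
    (h2V : (ρV ((List.ofFn (fun i : Fin m => Equiv.swap i.castSucc i.succ)).reverse.prod))
        ∘ₗ dV 0 = dV (Fin.last (m + 1)))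
    (a : V)
    (hanti : ∀ σ : Equiv.Perm (Fin (m + 1)),
      ρV σ a = (((Equiv.Perm.sign σ : ℤ) : k)) • a)
    (b : U) (hb : a = ∑ i : Fin (m + 2), ((-1 : k) ^ (i : ℕ)) • dV i b) :
    a = 0 := by
  have : IsAddTorsionFree V := .of_isTorsionFree k V
  have h_alt := alternatization_eq_card_smul ρV fun σ => by
    rw [hanti, Int.cast_smul_eq_zsmul]
  rw [hb, alternatization_coboundary_eq_zero dV ρV h1V h2V b, ← hb] at h_alt
  exact (smul_eq_zero.mp h_alt.symm).resolve_left Fintype.card_ne_zero
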